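/- For every n ≥ 2, there is no independent set S ∈ I_n whose minimal φ-period is 4, and no independent set whose minimal φ-period is 6; that is, no S satisfies (φ^4(S) = S and φ^2(S) ≠ S and φ(S) ≠ S), and no S satisfies (φ^6(S) = S with φ^m(S) ≠ S for all 1 ≤ m < 6). Equivalently, no φ-orbit of I_n has size 4 or size 6. -/
import Mathlib


/-- An independent set of the path graph `P_n` (vertices `1,…,n`, edges `{i,i+1}`):
a subset of `{1,…,n}` containing no two adjacent vertices. -/
def IndepSet (n : ℕ) (S : Finset ℕ) : Prop :=
  S ⊆ Finset.Icc 1 n ∧ ∀ i ∈ S, i + 1 ∉ S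

instance (n : ℕ) (S : Finset ℕ) : Decidable (IndepSet n S) := by
  unfold IndepSet; infer_instance

/-- The toggle `τ_i` acting on independent sets of the path graph `P_n`. -/
def toggle (n i : ℕ) (S : Finset ℕ) : Finset ℕ :=
  if i ∈ S then S.erase i
  else if IndepSet n (insert i S) then insert i S
  else S

/-- `φ = τ_n ∘ ⋯ ∘ τ_2 ∘ τ_1` (toggle at each vertex from left to right). -/
def phi (n : ℕ) (S : Finset ℕ) : Finset ℕ :=
  (List.range n).foldl (fun T k => toggle n (k + 1) T) S

/-- `φ⁻¹ = τ_1 ∘ τ_2 ∘ ⋯ ∘ τ_n` (toggle at each vertex from right to left). -/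
def phiInv (n : ℕ) (S : Finset ℕ) : Finset ℕ :=
  (List.range n).foldr (fun k T => toggle n (k + 1) T) S

lemma indep_mono {n : ℕ} {S T : Finset ℕ} (h : IndepSet n S) (hsub : T ⊆ S) :
    IndepSet n T :=
  ⟨hsub.trans h.1, fun i hi hi1 => h.2 i (hsub hi) (hsub hi1)⟩

lemma toggle_indep {n i : ℕ} {S : Finset ℕ} (h : IndepSet n S) :
    IndepSet n (toggle n i S) := by
  unfold toggle
  split_ifs with h1 h2
  · exact indep_mono h (Finset.erase_subset _ _)
  · exact h2
  · exact h

lemma mem_toggle_ne {n i m : ℕ} {S : Finset ℕ} (h : m ≠ i) :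
    m ∈ toggle n i S ↔ m ∈ S := by
  unfold toggle
  split_ifs with h1 h2
  · simp [Finset.mem_erase, h]
  · simp [Finset.mem_insert, h]
  · rfl

def phiAux (n j : ℕ) (S : Finset ℕ) : Finset ℕ :=
  (List.range j).foldl (fun T k => toggle n (k + 1) T) S

lemma phi_eq_phiAux (n : ℕ) (S : Finset ℕ) : phi n S = phiAux n n S := rfl

lemma phiAux_succ (n j : ℕ) (S : Finset ℕ) :
    phiAux n (j+1) S = toggle n (j+1) (phiAux n j S) := by
  unfold phiAux
  rw [List.range_succ, List.foldl_append]
  rfl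

lemma phiAux_indep {n : ℕ} (j : ℕ) {S : Finset ℕ} (h : IndepSet n S) :
    IndepSet n (phiAux n j S) := by
  induction j with
  | zero => exact h
  | succ j ih => rw [phiAux_succ]; exact toggle_indep ih

lemma phi_indep {n : ℕ} {S : Finset ℕ} (h : IndepSet n S) :
    IndepSet n (phi n S) := phiAux_indep n h

lemma mem_phiAux_of_gt {n : ℕ} {j l : ℕ} (h : j < l) (S : Finset ℕ) :
    l ∈ phiAux n j S ↔ l ∈ S := by
  induction j with
  | zero => rfl
  | succ j ih =>
      rw [phiAux_succ, mem_toggle_ne (by omega)]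
      exact ih (by omega)

lemma mem_phiAux_stable {n : ℕ} {k j : ℕ} (h : k ≤ j) (S : Finset ℕ) :
    k ∈ phiAux n j S ↔ k ∈ phiAux n k S := by
  induction j with
  | zero => rw [Nat.le_zero.mp h]
  | succ j ih =>
      rcases Nat.eq_or_lt_of_le h with h' | h'
      · rw [h']
      · rw [phiAux_succ, mem_toggle_ne (by omega)]
        exact ih (by omega)

lemma mem_phi_iff {n i : ℕ} {T : Finset ℕ} (hT : IndepSet n T) (h1 : 1 ≤ i) (h2 : i ≤ n) :
    i ∈ phi n T ↔ (i ∉ T ∧ ((i-1) ∉ phi n T ∧ (i+1) ∉ T)) := by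
  obtain ⟨j, rfl⟩ : ∃ j, i = j + 1 := ⟨i - 1, by omega⟩
  set U := phiAux n j T with hU
  have hUind : IndepSet n U := phiAux_indep j hT
  have hmem : j+1 ∈ phi n T ↔ j+1 ∈ toggle n (j+1) U := by
    rw [phi_eq_phiAux, mem_phiAux_stable h2, phiAux_succ]
  have hiT : j+1 ∈ U ↔ j+1 ∈ T := mem_phiAux_of_gt (by omega) T
  have hi1T : j+1+1 ∈ U ↔ j+1+1 ∈ T := mem_phiAux_of_gt (by omega) T
  have hjs : j ∈ phi n T ↔ j ∈ U := by
    rw [phi_eq_phiAux, mem_phiAux_stable (by omega : j ≤ n)]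
  simp only [Nat.add_sub_cancel]
  rw [hmem, ← hiT, ← hi1T, hjs]
  unfold toggle
  split_ifs with ha hb
  · simp [Finset.mem_erase, ha]
  · simp only [Finset.mem_insert, true_or, true_iff]
    refine ⟨ha, ?_, ?_⟩
    · intro hjU
      exact hb.2 j (Finset.mem_insert_of_mem hjU) (Finset.mem_insert_self _ _)
    · intro hU1
      exact hb.2 (j+1) (Finset.mem_insert_self _ _) (Finset.mem_insert_of_mem hU1)
  · constructor
    · intro h; exact absurd h ha
    · rintro ⟨hA, hB, hC⟩
      exfalso; apply hb
      constructor
      · intro x hx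
        rcases Finset.mem_insert.mp hx with rfl | hx
        · simp only [Finset.mem_Icc]; omega
        · exact hUind.1 hx
      · intro x hx hx1
        rcases Finset.mem_insert.mp hx with rfl | hx
        · rcases Finset.mem_insert.mp hx1 with he | hx1
          · omega
          · exact hC hx1
        · rcases Finset.mem_insert.mp hx1 with he | hx1
          · apply hB
            have : x = j := by omega
            rwa [this] at hx
          · exact hUind.2 x hx hx1

lemma iter_indep {n : ℕ} {S : Finset ℕ} (hS : IndepSet n S) (t : ℕ) :
    IndepSet n ((phi n)^[t] S) := by
  induction t with
  | zero => exact hS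
  | succ t ih => rw [Function.iterate_succ_apply']; exact phi_indep ih

lemma key {n : ℕ} {S : Finset ℕ} (hS : IndepSet n S) {i : ℕ} (h1 : 1 ≤ i) (h2 : i ≤ n) (t : ℕ) :
    decide (i ∈ (phi n)^[t+1] S) =
      (!decide (i ∈ (phi n)^[t] S) &&
        (!decide ((i-1) ∈ (phi n)^[t+1] S) && !decide ((i+1) ∈ (phi n)^[t] S))) := by
  have hT : IndepSet n ((phi n)^[t] S) := iter_indep hS t
  rw [Function.iterate_succ_apply' (phi n) t S]
  simp only [← decide_not, ← Bool.decide_and]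
  rw [decide_eq_decide]
  exact mem_phi_iff hT h1 h2

lemma not_mem_iter {n : ℕ} {S : Finset ℕ} (hS : IndepSet n S) {i : ℕ}
    (hi : i ∉ Finset.Icc 1 n) (t : ℕ) : i ∉ (phi n)^[t] S :=
  fun h => hi ((iter_indep hS t).1 h)

set_option maxRecDepth 100000

/-! ### Encodings of periodic columns as bitmasks -/

def enc4 (b0 b1 b2 b3 : Bool) : ℕ :=
  (cond b0 1 0) + 2*(cond b1 1 0) + 4*(cond b2 1 0) + 8*(cond b3 1 0)

def enc6 (b0 b1 b2 b3 b4 b5 : Bool) : ℕ :=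
  (cond b0 1 0) + 2*(cond b1 1 0) + 4*(cond b2 1 0) + 8*(cond b3 1 0) +
    16*(cond b4 1 0) + 32*(cond b5 1 0)

lemma enc4_lt : ∀ b0 b1 b2 b3, enc4 b0 b1 b2 b3 < 16 := by decide
lemma enc6_lt : ∀ b0 b1 b2 b3 b4 b5, enc6 b0 b1 b2 b3 b4 b5 < 64 := by decide

lemma tb_enc4_0 : ∀ b0 b1 b2 b3, Nat.testBit (enc4 b0 b1 b2 b3) 0 = b0 := by decide
lemma tb_enc4_1 : ∀ b0 b1 b2 b3, Nat.testBit (enc4 b0 b1 b2 b3) 1 = b1 := by decide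
lemma tb_enc4_2 : ∀ b0 b1 b2 b3, Nat.testBit (enc4 b0 b1 b2 b3) 2 = b2 := by decide
lemma tb_enc4_3 : ∀ b0 b1 b2 b3, Nat.testBit (enc4 b0 b1 b2 b3) 3 = b3 := by decide

lemma tb_enc6_0 : ∀ b0 b1 b2 b3 b4 b5, Nat.testBit (enc6 b0 b1 b2 b3 b4 b5) 0 = b0 := by decide
lemma tb_enc6_1 : ∀ b0 b1 b2 b3 b4 b5, Nat.testBit (enc6 b0 b1 b2 b3 b4 b5) 1 = b1 := by decide
lemma tb_enc6_2 : ∀ b0 b1 b2 b3 b4 b5, Nat.testBit (enc6 b0 b1 b2 b3 b4 b5) 2 = b2 := by decide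
lemma tb_enc6_3 : ∀ b0 b1 b2 b3 b4 b5, Nat.testBit (enc6 b0 b1 b2 b3 b4 b5) 3 = b3 := by decide
lemma tb_enc6_4 : ∀ b0 b1 b2 b3 b4 b5, Nat.testBit (enc6 b0 b1 b2 b3 b4 b5) 4 = b4 := by decide
lemma tb_enc6_5 : ∀ b0 b1 b2 b3 b4 b5, Nat.testBit (enc6 b0 b1 b2 b3 b4 b5) 5 = b5 := by decide

def col4 (n : ℕ) (S : Finset ℕ) (i : ℕ) : ℕ :=
  enc4 (decide (i ∈ S)) (decide (i ∈ (phi n)^[1] S))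
    (decide (i ∈ (phi n)^[2] S)) (decide (i ∈ (phi n)^[3] S))

def col6 (n : ℕ) (S : Finset ℕ) (i : ℕ) : ℕ :=
  enc6 (decide (i ∈ S)) (decide (i ∈ (phi n)^[1] S))
    (decide (i ∈ (phi n)^[2] S)) (decide (i ∈ (phi n)^[3] S))
    (decide (i ∈ (phi n)^[4] S)) (decide (i ∈ (phi n)^[5] S))

lemma col4_lt (n : ℕ) (S : Finset ℕ) (i : ℕ) : col4 n S i < 16 := enc4_lt _ _ _ _
lemma col6_lt (n : ℕ) (S : Finset ℕ) (i : ℕ) : col6 n S i < 64 := enc6_lt _ _ _ _ _ _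

lemma col4_zero {n : ℕ} {S : Finset ℕ} (hS : IndepSet n S) {i : ℕ}
    (hi : i ∉ Finset.Icc 1 n) : col4 n S i = 0 := by
  have h0 : ∀ t, decide (i ∈ (phi n)^[t] S) = false :=
    fun t => decide_eq_false (not_mem_iter hS hi t)
  have hs : decide (i ∈ S) = false := decide_eq_false (fun h => hi (hS.1 h))
  simp only [col4, h0, hs]; rfl

lemma col6_zero {n : ℕ} {S : Finset ℕ} (hS : IndepSet n S) {i : ℕ}
    (hi : i ∉ Finset.Icc 1 n) : col6 n S i = 0 := by
  have h0 : ∀ t, decide (i ∈ (phi n)^[t] S) = false :=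
    fun t => decide_eq_false (not_mem_iter hS hi t)
  have hs : decide (i ∈ S) = false := decide_eq_false (fun h => hi (hS.1 h))
  simp only [col6, h0, hs]; rfl

/-! ### Transfer relations -/

def trans4 (a b c : ℕ) : Bool :=
  (Nat.testBit b 1 == (!Nat.testBit b 0 && (!Nat.testBit a 1 && !Nat.testBit c 0))) &&
  (Nat.testBit b 2 == (!Nat.testBit b 1 && (!Nat.testBit a 2 && !Nat.testBit c 1))) &&
  (Nat.testBit b 3 == (!Nat.testBit b 2 && (!Nat.testBit a 3 && !Nat.testBit c 2))) &&
  (Nat.testBit b 0 == (!Nat.testBit b 3 && (!Nat.testBit a 0 && !Nat.testBit c 3)))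

def trans6 (a b c : ℕ) : Bool :=
  (Nat.testBit b 1 == (!Nat.testBit b 0 && (!Nat.testBit a 1 && !Nat.testBit c 0))) &&
  (Nat.testBit b 2 == (!Nat.testBit b 1 && (!Nat.testBit a 2 && !Nat.testBit c 1))) &&
  (Nat.testBit b 3 == (!Nat.testBit b 2 && (!Nat.testBit a 3 && !Nat.testBit c 2))) &&
  (Nat.testBit b 4 == (!Nat.testBit b 3 && (!Nat.testBit a 4 && !Nat.testBit c 3))) &&
  (Nat.testBit b 5 == (!Nat.testBit b 4 && (!Nat.testBit a 5 && !Nat.testBit c 4))) &&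
  (Nat.testBit b 0 == (!Nat.testBit b 5 && (!Nat.testBit a 0 && !Nat.testBit c 5)))

lemma trans4_col {n : ℕ} {S : Finset ℕ} (hS : IndepSet n S)
    (h4 : (phi n)^[4] S = S) {i : ℕ} (h1 : 1 ≤ i) (h2 : i ≤ n) :
    trans4 (col4 n S (i-1)) (col4 n S i) (col4 n S (i+1)) = true := by
  have k0 := key hS h1 h2 0
  have k1 := key hS h1 h2 1
  have k2 := key hS h1 h2 2
  have k3 := key hS h1 h2 3
  simp only [Nat.reduceAdd, Function.iterate_zero_apply] at k0 k1 k2 k3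
  rw [h4] at k3
  simp only [trans4, col4, tb_enc4_0, tb_enc4_1, tb_enc4_2, tb_enc4_3,
    Bool.and_eq_true, beq_iff_eq]
  exact ⟨⟨⟨k0, k1⟩, k2⟩, k3⟩

lemma trans6_col {n : ℕ} {S : Finset ℕ} (hS : IndepSet n S)
    (h6 : (phi n)^[6] S = S) {i : ℕ} (h1 : 1 ≤ i) (h2 : i ≤ n) :
    trans6 (col6 n S (i-1)) (col6 n S i) (col6 n S (i+1)) = true := by
  have k0 := key hS h1 h2 0
  have k1 := key hS h1 h2 1
  have k2 := key hS h1 h2 2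
  have k3 := key hS h1 h2 3
  have k4 := key hS h1 h2 4
  have k5 := key hS h1 h2 5
  simp only [Nat.reduceAdd, Function.iterate_zero_apply] at k0 k1 k2 k3 k4 k5
  rw [h6] at k5
  simp only [trans6, col6, tb_enc6_0, tb_enc6_1, tb_enc6_2, tb_enc6_3, tb_enc6_4, tb_enc6_5,
    Bool.and_eq_true, beq_iff_eq]
  exact ⟨⟨⟨⟨⟨k0, k1⟩, k2⟩, k3⟩, k4⟩, k5⟩

/-! ### Certified automaton data -/

def R4 : List ℕ := [0, 1, 2, 3, 4, 5, 6, 7, 8, 9, 10, 11, 12, 13, 14, 15, 22, 23, 44, 46, 73, 77, 80, 81, 84, 85, 131, 139, 160, 162, 168, 170]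

def L4 : List ℕ := [0, 5, 10, 80, 160]

def R6 : List ℕ := [0, 1, 2, 3, 4, 5, 6, 7, 8, 9, 10, 11, 12, 13, 14, 15, 16, 17, 18, 19, 20, 21, 22, 23, 24, 25, 26, 27, 28, 29, 30, 31, 32, 33, 34, 35, 36, 37, 38, 39, 40, 41, 42, 43, 44, 45, 46, 47, 48, 49, 50, 51, 52, 53, 54, 55, 56, 57, 58, 59, 60, 61, 62, 63, 76, 77, 78, 79, 92, 93, 94, 95, 152, 154, 156, 158, 184, 186, 188, 190, 304, 305, 308, 309, 312, 313, 316, 317, 344, 345, 348, 349, 545, 547, 553, 555, 561, 563, 569, 571, 576, 577, 578, 579, 584, 585, 586, 587, 592, 593, 594, 595, 600, 601, 602, 603, 688, 690, 696, 698, 1027, 1031, 1043, 1047, 1059, 1063, 1075, 1079, 1094, 1095, 1110, 1111, 1152, 1154, 1156, 1158, 1168, 1170, 1172, 1174, 1184, 1186, 1188, 1190, 1200, 1202, 1204, 1206, 1313, 1317, 1329, 1333, 1344, 1345, 1348, 1349, 1360, 1361, 1364, 1365, 2054, 2055, 2062, 2063, 2086, 2087, 2094, 2095, 2188, 2190, 2220,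 2222, 2304, 2305, 2308, 2309, 2312, 2313, 2316, 2317, 2336, 2337, 2340, 2341, 2344, 2345, 2348, 2349, 2563, 2571, 2595, 2603, 2688, 2690, 2696, 2698, 2720, 2722, 2728, 2730]

def L6 : List ℕ := [0, 9, 18, 21, 36, 42, 576, 594, 1152, 1188, 1344, 2304, 2313, 2688]

def L6a : List ℕ := [0, 21, 42, 1344, 2688]

def L6b : List ℕ := [9, 18, 36, 576, 594, 1152, 1188, 2304, 2313]

lemma chk1_4 : ∀ s ∈ R4, ∀ c ∈ List.range 16,
    trans4 (s/16) (s%16) c = true → (s%16*16+c) ∈ R4 := by decide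

lemma chk2_4 : ∀ b ∈ List.range 16, b ∈ R4 := by decide

lemma chk3_4 : ∀ s ∈ R4, s % 16 = 0 → s ∈ L4 := by decide

lemma chk4_4 : ∀ s ∈ R4, ∀ c ∈ List.range 16,
    trans4 (s/16) (s%16) c = true → (s%16*16+c) ∈ L4 → s ∈ L4 := by decide

lemma chk5_4 : ∀ s ∈ L4, Nat.testBit (s%16) 0 = Nat.testBit (s%16) 2 := by decide

lemma chk1_6 : ∀ s ∈ R6, ∀ c ∈ List.range 64,
    trans6 (s/64) (s%64) c = true → (s%64*64+c) ∈ R6 := by decide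

lemma chk2_6 : ∀ b ∈ List.range 64, b ∈ R6 := by decide

lemma chk3_6 : ∀ s ∈ R6, s % 64 = 0 → s ∈ L6 := by decide

lemma chk4_6 : ∀ s ∈ R6, ∀ c ∈ List.range 64,
    trans6 (s/64) (s%64) c = true → (s%64*64+c) ∈ L6 → s ∈ L6 := by decide

lemma chk7_6 : ∀ s ∈ L6, s ∈ L6a ∨ s ∈ L6b := by decide

lemma chk6a_6 : ∀ s ∈ L6a, ∀ c ∈ List.range 64,
    trans6 (s/64) (s%64) c = true → (s%64*64+c) ∈ L6 → (s%64*64+c) ∈ L6a := by decide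

lemma chk6b_6 : ∀ s ∈ L6b, ∀ c ∈ List.range 64,
    trans6 (s/64) (s%64) c = true → (s%64*64+c) ∈ L6 → (s%64*64+c) ∈ L6b := by decide

lemma chk5a_6 : ∀ s ∈ L6a, Nat.testBit (s%64) 0 = Nat.testBit (s%64) 2 := by decide

lemma chk5b_6 : ∀ s ∈ L6b, Nat.testBit (s%64) 0 = Nat.testBit (s%64) 3 := by decide

/-! ### Main period lemmas -/

lemma period4 {n : ℕ} {S : Finset ℕ} (hS : IndepSet n S)
    (h4 : (phi n)^[4] S = S) : (phi n)^[2] S = S := by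
  set c := col4 n S with hc
  have hlt : ∀ i, c i < 16 := fun i => col4_lt n S i
  have hc0 : c 0 = 0 := col4_zero hS (by simp)
  have hcn : c (n+1) = 0 := col4_zero hS (by simp [Finset.mem_Icc])
  have htr : ∀ i, 1 ≤ i → i ≤ n → trans4 (c (i-1)) (c i) (c (i+1)) = true :=
    fun i h1 h2 => trans4_col hS h4 h1 h2
  have e1 : ∀ a b : ℕ, b < 16 → (a * 16 + b) / 16 = a := by intro a b h; omega
  have e2 : ∀ a b : ℕ, b < 16 → (a * 16 + b) % 16 = b := by intro a b h; omega
  have hfwd : ∀ k, k ≤ n → c k * 16 + c (k+1) ∈ R4 := by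
    intro k
    induction k with
    | zero =>
        intro _
        rw [hc0]
        simpa using chk2_4 (c 1) (List.mem_range.mpr (hlt 1))
    | succ k ih =>
        intro hk
        have hp := ih (by omega)
        have ht := htr (k+1) (by omega) (by omega)
        simp only [Nat.add_sub_cancel] at ht
        have := chk1_4 _ hp (c (k+1+1)) (List.mem_range.mpr (hlt _))
          (by rw [e1 _ _ (hlt (k+1)), e2 _ _ (hlt (k+1))]; exact ht)
        rwa [e2 _ _ (hlt (k+1))] at this
  have hbwd : ∀ j, j ≤ n → c (n-j) * 16 + c (n-j+1) ∈ L4 := by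
    intro j
    induction j with
    | zero =>
        intro _
        simp only [Nat.sub_zero]
        exact chk3_4 _ (hfwd n le_rfl) (by rw [hcn]; omega)
    | succ j ih =>
        intro hj
        have hnj : n - j = (n - (j+1)) + 1 := by omega
        have ihL := ih (by omega)
        rw [hnj] at ihL
        set i := n - (j+1) with hi
        have ht := htr (i+1) (by omega) (by omega)
        simp only [Nat.add_sub_cancel] at ht
        exact chk4_4 _ (hfwd i (by omega)) (c (i+1+1)) (List.mem_range.mpr (hlt _))
          (by rw [e1 _ _ (hlt (i+1)), e2 _ _ (hlt (i+1))]; exact ht)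
          (by rw [e2 _ _ (hlt (i+1))]; exact ihL)
  have hlive : ∀ k, k ≤ n → c k * 16 + c (k+1) ∈ L4 := by
    intro k hk
    have := hbwd (n-k) (by omega)
    rw [show n - (n-k) = k by omega] at this
    exact this
  ext i
  by_cases hi : i ∈ Finset.Icc 1 n
  · rw [Finset.mem_Icc] at hi
    obtain ⟨k, rfl⟩ : ∃ k, i = k + 1 := ⟨i - 1, by omega⟩
    have hm := chk5_4 _ (hlive k (by omega))
    rw [e2 _ _ (hlt (k+1))] at hm
    simp only [hc, col4, tb_enc4_0, tb_enc4_2] at hm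
    exact decide_eq_decide.mp hm.symm
  · constructor
    · intro h; exact absurd h (not_mem_iter hS hi 2)
    · intro h; exact absurd (hS.1 h) hi

lemma period6 {n : ℕ} {S : Finset ℕ} (hS : IndepSet n S)
    (h6 : (phi n)^[6] S = S) : (phi n)^[2] S = S ∨ (phi n)^[3] S = S := by
  set c := col6 n S with hc
  have hlt : ∀ i, c i < 64 := fun i => col6_lt n S i
  have hc0 : c 0 = 0 := col6_zero hS (by simp)
  have hcn : c (n+1) = 0 := col6_zero hS (by simp [Finset.mem_Icc])
  have htr : ∀ i, 1 ≤ i → i ≤ n → trans6 (c (i-1)) (c i) (c (i+1)) = true :=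
    fun i h1 h2 => trans6_col hS h6 h1 h2
  have e1 : ∀ a b : ℕ, b < 64 → (a * 64 + b) / 64 = a := by intro a b h; omega
  have e2 : ∀ a b : ℕ, b < 64 → (a * 64 + b) % 64 = b := by intro a b h; omega
  have hfwd : ∀ k, k ≤ n → c k * 64 + c (k+1) ∈ R6 := by
    intro k
    induction k with
    | zero =>
        intro _
        rw [hc0]
        simpa using chk2_6 (c 1) (List.mem_range.mpr (hlt 1))
    | succ k ih =>
        intro hk
        have hp := ih (by omega)
        have ht := htr (k+1) (by omega) (by omega)
        simp only [Nat.add_sub_cancel] at ht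
        have := chk1_6 _ hp (c (k+1+1)) (List.mem_range.mpr (hlt _))
          (by rw [e1 _ _ (hlt (k+1)), e2 _ _ (hlt (k+1))]; exact ht)
        rwa [e2 _ _ (hlt (k+1))] at this
  have hbwd : ∀ j, j ≤ n → c (n-j) * 64 + c (n-j+1) ∈ L6 := by
    intro j
    induction j with
    | zero =>
        intro _
        simp only [Nat.sub_zero]
        exact chk3_6 _ (hfwd n le_rfl) (by rw [hcn]; omega)
    | succ j ih =>
        intro hj
        have hnj : n - j = (n - (j+1)) + 1 := by omega
        have ihL := ih (by omega)
        rw [hnj] at ihL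
        set i := n - (j+1) with hi
        have ht := htr (i+1) (by omega) (by omega)
        simp only [Nat.add_sub_cancel] at ht
        exact chk4_6 _ (hfwd i (by omega)) (c (i+1+1)) (List.mem_range.mpr (hlt _))
          (by rw [e1 _ _ (hlt (i+1)), e2 _ _ (hlt (i+1))]; exact ht)
          (by rw [e2 _ _ (hlt (i+1))]; exact ihL)
  have hlive : ∀ k, k ≤ n → c k * 64 + c (k+1) ∈ L6 := by
    intro k hk
    have := hbwd (n-k) (by omega)
    rw [show n - (n-k) = k by omega] at this
    exact this
  rcases chk7_6 _ (hlive 0 (by omega)) with hcl | hcl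
  · -- 2-periodic class
    left
    have hall : ∀ k, k ≤ n → c k * 64 + c (k+1) ∈ L6a := by
      intro k
      induction k with
      | zero => intro _; exact hcl
      | succ k ih =>
          intro hk
          have hp := ih (by omega)
          have ht := htr (k+1) (by omega) (by omega)
          simp only [Nat.add_sub_cancel] at ht
          have := chk6a_6 _ hp (c (k+1+1)) (List.mem_range.mpr (hlt _))
            (by rw [e1 _ _ (hlt (k+1)), e2 _ _ (hlt (k+1))]; exact ht)
            (by rw [e2 _ _ (hlt (k+1))]; exact hlive (k+1) hk)
          rwa [e2 _ _ (hlt (k+1))] at this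
    ext i
    by_cases hi : i ∈ Finset.Icc 1 n
    · rw [Finset.mem_Icc] at hi
      obtain ⟨k, rfl⟩ : ∃ k, i = k + 1 := ⟨i - 1, by omega⟩
      have hm := chk5a_6 _ (hall k (by omega))
      rw [e2 _ _ (hlt (k+1))] at hm
      simp only [hc, col6, tb_enc6_0, tb_enc6_2] at hm
      exact decide_eq_decide.mp hm.symm
    · constructor
      · intro h; exact absurd h (not_mem_iter hS hi 2)
      · intro h; exact absurd (hS.1 h) hi
  · -- 3-periodic class
    right
    have hall : ∀ k, k ≤ n → c k * 64 + c (k+1) ∈ L6b := by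
      intro k
      induction k with
      | zero => intro _; exact hcl
      | succ k ih =>
          intro hk
          have hp := ih (by omega)
          have ht := htr (k+1) (by omega) (by omega)
          simp only [Nat.add_sub_cancel] at ht
          have := chk6b_6 _ hp (c (k+1+1)) (List.mem_range.mpr (hlt _))
            (by rw [e1 _ _ (hlt (k+1)), e2 _ _ (hlt (k+1))]; exact ht)
            (by rw [e2 _ _ (hlt (k+1))]; exact hlive (k+1) hk)
          rwa [e2 _ _ (hlt (k+1))] at this
    ext i
    by_cases hi : i ∈ Finset.Icc 1 n
    · rw [Finset.mem_Icc] at hi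
      obtain ⟨k, rfl⟩ : ∃ k, i = k + 1 := ⟨i - 1, by omega⟩
      have hm := chk5b_6 _ (hall k (by omega))
      rw [e2 _ _ (hlt (k+1))] at hm
      simp only [hc, col6, tb_enc6_0, tb_enc6_3] at hm
      exact decide_eq_decide.mp hm.symm
    · constructor
      · intro h; exact absurd h (not_mem_iter hS hi 3)
      · intro h; exact absurd (hS.1 h) hi

/-- No `φ`-orbit of `I_n` has size 4 or size 6: no `S ∈ I_n` has minimal
`φ`-period 4 or 6. -/
theorem stmt18 (n : ℕ) (hn : 2 ≤ n) (S : Finset ℕ) (hS : IndepSet n S) :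
    ¬((phi n)^[4] S = S ∧ (phi n)^[2] S ≠ S ∧ phi n S ≠ S)
    ∧ ¬((phi n)^[6] S = S ∧ ∀ m : ℕ, 1 ≤ m → m < 6 → (phi n)^[m] S ≠ S) := by
  constructor
  · rintro ⟨h4, h2, _⟩
    exact h2 (period4 hS h4)
  · rintro ⟨h6, hm⟩
    rcases period6 hS h6 with h | h
    · exact hm 2 (by norm_num) (by norm_num) h
    · exact hm 3 (by norm_num) (by norm_num) h
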